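/- If λ, δ, ρ are proper m-marked cycle shapes and n ≥ max(m, |λ|, |δ|, |ρ|), then the degree (in n) of the polynomial structure coefficient c_{λ̲ₙ δ̲ₙ}^{ρ̲ₙ}(n) of Z_{n,m} is at most (|λ| + |δ| − |ρ|)/2. -/

import Mathlib

/-- An `m`-partial permutation (of ℕ): a finite domain `d` containing `[m] = {0,…,m-1}`
together with a permutation of `d`, encoded by its extension `σ` to `ℕ` which is the
identity outside `d`. -/
structure MPP (m : ℕ) where
  d : Finset ℕ
  σ : Equiv.Perm ℕ
  range_sub : Finset.range m ⊆ d
  fix : ∀ x ∉ d, σ x = x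

namespace MPP

variable {m : ℕ}

@[ext] theorem ext {p q : MPP m} (hd : p.d = q.d) (hσ : p.σ = q.σ) : p = q := by
  cases p; cases q; simp only [mk.injEq]; exact ⟨hd, hσ⟩

/-- The product of `m`-partial permutations: union of the domains, composition of the
extended permutations (restricted to the union). -/
instance : Monoid (MPP m) where
  mul p q := ⟨p.d ∪ q.d, p.σ * q.σ, p.range_sub.trans Finset.subset_union_left,
    fun x hx => by
      have hq : x ∉ q.d := fun h => hx (Finset.mem_union_right _ h)
      have hp : x ∉ p.d := fun h => hx (Finset.mem_union_left _ h)
      simp [Equiv.Perm.mul_apply, q.fix x hq, p.fix x hp]⟩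
  one := ⟨Finset.range m, 1, le_refl _, fun _ _ => rfl⟩
  mul_assoc p q r := ext (Finset.union_assoc _ _ _) (mul_assoc _ _ _)
  one_mul p := ext (Finset.union_eq_right.mpr p.range_sub) (one_mul _)
  mul_one p := ext (Finset.union_eq_left.mpr p.range_sub) (mul_one _)

@[simp] theorem mul_d (p q : MPP m) : (p * q).d = p.d ∪ q.d := rfl
@[simp] theorem mul_σ (p q : MPP m) : (p * q).σ = p.σ * q.σ := rfl
@[simp] theorem one_d : (1 : MPP m).d = Finset.range m := rfl
@[simp] theorem one_σ : (1 : MPP m).σ = 1 := rfl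

/-- Two `m`-partial permutations have the same `m`-marked cycle type iff there is a
relabelling of ℕ fixing `[m]` pointwise carrying one to the other. -/
def sameType (p q : MPP m) : Prop :=
  ∃ σ : Equiv.Perm ℕ, (∀ x < m, σ x = x) ∧ p.d.image σ = q.d ∧ σ * p.σ * σ⁻¹ = q.σ

/-- `m₁`: the number of trivial cycles `(∗)`, i.e. fixed points of the permutation lying
in the domain but outside `[m]`. -/
def m1 (p : MPP m) : ℕ := ((p.d \ Finset.range m).filter (fun x => p.σ x = x)).card

/-- `p` padded with fixed points so that its domain becomes `[n]` (when `p.d ⊆ [n]`);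
this realizes the shape `ρ̲ₙ`. -/
def padTo (n : ℕ) (p : MPP m) : MPP m :=
  ⟨p.d ∪ Finset.range n, p.σ, p.range_sub.trans Finset.subset_union_left,
   fun x hx => p.fix x fun h => hx (Finset.mem_union_left _ h)⟩

/-- `p` with `k` fresh fixed points adjoined to its domain; this realizes the shape `ρᵏ`. -/
def addFix (p : MPP m) (k : ℕ) : MPP m :=
  ⟨p.d ∪ (Finset.range (p.d.sup id + 1 + k) \ Finset.range (p.d.sup id + 1)), p.σ,
   p.range_sub.trans Finset.subset_union_left,
   fun x hx => p.fix x fun h => hx (Finset.mem_union_left _ h)⟩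

/-- A shape is proper when it has no cycle `(∗)`, i.e. no fixed point outside `[m]`. -/
def isProper (p : MPP m) : Prop := ∀ x ∈ p.d, m ≤ x → p.σ x ≠ x

/-- The subgroup `Stab_n(m)` of permutations of ℕ fixing `[m]` pointwise and fixing
everything outside `[n]` (i.e. `Stab_n(m) ≤ S_n`). -/
def StabN (m n : ℕ) : Subgroup (Equiv.Perm ℕ) where
  carrier := {σ | (∀ x < m, σ x = x) ∧ (∀ x, n ≤ x → σ x = x)}
  one_mem' := ⟨fun _ _ => rfl, fun _ _ => rfl⟩
  mul_mem' := by
    rintro σ τ ⟨h1, h2⟩ ⟨h3, h4⟩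
    exact ⟨fun x hx => by simp [Equiv.Perm.mul_apply, h3 x hx, h1 x hx],
           fun x hx => by simp [Equiv.Perm.mul_apply, h4 x hx, h2 x hx]⟩
  inv_mem' := by
    rintro σ ⟨h1, h2⟩
    refine ⟨fun x hx => ?_, fun x hx => ?_⟩
    · conv_lhs => rw [← h1 x hx]
      exact Equiv.symm_apply_apply σ x
    · conv_lhs => rw [← h2 x hx]
      exact Equiv.symm_apply_apply σ x

/-- The conjugation action of `Stab_n(m)` on `m`-partial permutations:
`σ·(d,ω) = (σ(d), σ∘ω∘σ⁻¹)`. -/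
def conjAct {n : ℕ} (σ : StabN m n) (p : MPP m) : MPP m :=
  ⟨p.d.image (σ : Equiv.Perm ℕ), (σ : Equiv.Perm ℕ) * p.σ * (σ : Equiv.Perm ℕ)⁻¹,
   fun x hx => Finset.mem_image.mpr
     ⟨x, p.range_sub hx, σ.2.1 x (Finset.mem_range.mp hx)⟩,
   fun x hx => by
     have h1 : (σ : Equiv.Perm ℕ)⁻¹ x ∉ p.d := fun h =>
       hx (Finset.mem_image.mpr ⟨_, h, Equiv.apply_symm_apply (σ : Equiv.Perm ℕ) x⟩)
     rw [Equiv.Perm.mul_apply, Equiv.Perm.mul_apply, p.fix _ h1]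
     exact Equiv.apply_symm_apply (σ : Equiv.Perm ℕ) x⟩

end MPP

/-- The class sum K_{ρ̲ₙ} in ℤ[S_n] ⊆ ℤ[Perm ℕ], where ρ is represented by `r`
(with `r.d ⊆ [n]`): the sum of all permutations of [n] of m-marked cycle type ρ̲ₙ. -/
noncomputable def Kn (m n : ℕ) (r : MPP m) : MonoidAlgebra ℤ (Equiv.Perm ℕ) :=
  ∑ᶠ p ∈ {p : MPP m | p.d ⊆ Finset.range n ∧ MPP.sameType (r.padTo n) p},
    MonoidAlgebra.single p.σ (1 : ℤ)

/-- The structure coefficient k_{λδ}^{ρᵏ} of the universal algebra: the number of pairs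
of m-partial permutations of types λ, δ whose product is the fixed m-partial
permutation `r.addFix k` of type ρᵏ. -/
noncomputable def kcoef (m : ℕ) (rl rd r : MPP m) (k : ℕ) : ℕ :=
  Nat.card {pq : MPP m × MPP m //
    MPP.sameType rl pq.1 ∧ MPP.sameType rd pq.2 ∧ pq.1 * pq.2 = r.addFix k}


open Finset Equiv

theorem Equiv.Perm.apply_inv_self {α : Type*} (f : Equiv.Perm α) (x : α) : f (f⁻¹ x) = x :=
  f.apply_symm_apply x

theorem Equiv.Perm.inv_apply_self {α : Type*} (f : Equiv.Perm α) (x : α) : f⁻¹ (f x) = x :=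
  f.symm_apply_apply x

namespace FHaux

lemma conj_fix {π u : Equiv.Perm ℕ} (h : ∀ x, u x ≠ x → π x = x) :
    π * u * π⁻¹ = u := by
  ext x
  simp only [Equiv.Perm.mul_apply]
  by_cases hx : u (π⁻¹ x) ≠ π⁻¹ x
  · have h2 : π⁻¹ x = x := by
      have h1 := h _ hx
      have := π.apply_inv_self x
      rw [h1] at this; exact this
    rw [h2]
    have hux : u x ≠ x := h2 ▸ hx
    have : u (u x) ≠ u x := fun hc => hux (u.injective hc)
    exact h _ this
  · push_neg at hx
    rw [hx, π.apply_inv_self]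
    by_contra hne
    have hux : u x ≠ x := fun hc => hne hc.symm
    have hπ : π⁻¹ x = x := by
      have h1 := h _ hux
      have h3 : π⁻¹ (π x) = π⁻¹ x := by rw [h1]
      rw [π.inv_apply_self] at h3
      exact h3.symm
    rw [hπ] at hx
    exact hne hx.symm

lemma mem_of_fixOutside {u : Equiv.Perm ℕ} {s : Finset ℕ} (hu : ∀ x ∉ s, u x = x)
    {x : ℕ} (hx : x ∈ s) : u x ∈ s := by
  by_contra h
  have h1 : u (u x) = u x := hu _ h
  have h2 := u.injective h1
  exact h (by rw [h2]; exact hx)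

lemma finite_fixOutside (s : Finset ℕ) : {u : Equiv.Perm ℕ | ∀ x ∉ s, u x = x}.Finite := by
  rw [← Set.finite_coe_iff]
  let F : {u : Equiv.Perm ℕ | ∀ x ∉ s, u x = x} → ({x // x ∈ s} → {x // x ∈ s}) :=
    fun u x => ⟨u.1 x, mem_of_fixOutside u.2 x.2⟩
  have hF : Function.Injective F := by
    intro u v huv
    ext1
    ext x
    by_cases hx : x ∈ s
    · exact Subtype.ext_iff.mp (congrFun huv ⟨x, hx⟩)
    · rw [u.2 x hx, v.2 x hx]
  exact Finite.of_injective F hF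

lemma exists_perm_disj : ∀ (n : ℕ) (S T : Finset ℕ), S.card = n → S.card = T.card →
    Disjoint S T → ∃ π : Equiv.Perm ℕ, (∀ x, x ∉ S ∪ T → π x = x) ∧ S.image π = T := by
  intro n
  induction n with
  | zero =>
    intro S T hS hST _
    have hS0 : S = ∅ := card_eq_zero.mp hS
    have hT0 : T = ∅ := card_eq_zero.mp (by rw [← hST, hS])
    exact ⟨1, fun x _ => rfl, by simp [hS0, hT0]⟩
  | succ n ih =>
    intro S T hS hST hdisj
    obtain ⟨a, ha⟩ : S.Nonempty := card_pos.mp (by omega)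
    obtain ⟨b, hb⟩ : T.Nonempty := card_pos.mp (by rw [← hST]; omega)
    have hab : a ≠ b := fun h => (disjoint_left.mp hdisj ha) (h ▸ hb)
    obtain ⟨π', hfix', himg'⟩ := ih (S.erase a) (T.erase b)
      (by rw [card_erase_of_mem ha, hS]; omega)
      (by rw [card_erase_of_mem ha, card_erase_of_mem hb, hST])
      (hdisj.mono (erase_subset _ _) (erase_subset _ _))
    have hπ'a : π' a = a := hfix' a (by
      simp only [mem_union, mem_erase, not_or, not_and]
      exact ⟨fun h => absurd rfl h, fun _ hc => (disjoint_left.mp hdisj ha) hc⟩)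
    refine ⟨Equiv.swap a b * π', fun x hx => ?_, ?_⟩
    · have hxa : x ≠ a := fun h => hx (mem_union_left _ (h ▸ ha))
      have hxb : x ≠ b := fun h => hx (mem_union_right _ (h ▸ hb))
      have hfx : π' x = x := hfix' x (fun h => hx (by
        rcases mem_union.mp h with h' | h'
        · exact mem_union_left _ (erase_subset _ _ h')
        · exact mem_union_right _ (erase_subset _ _ h')))
      simp [Equiv.Perm.mul_apply, hfx, Equiv.swap_apply_of_ne_of_ne hxa hxb]
    · apply eq_of_subset_of_card_le
      · intro y hy
        rw [mem_image] at hy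
        obtain ⟨x, hxS, hxy⟩ := hy
        rw [Equiv.Perm.mul_apply] at hxy
        by_cases hxa : x = a
        · subst hxa
          rw [hπ'a, Equiv.swap_apply_left] at hxy
          exact hxy ▸ hb
        · have hx' : π' x ∈ T.erase b := himg' ▸ mem_image_of_mem _ (mem_erase.mpr ⟨hxa, hxS⟩)
          have h1 : π' x ≠ a := fun h =>
            (disjoint_left.mp hdisj ha) (erase_subset _ _ (h ▸ hx'))
          have h2 : π' x ≠ b := (mem_erase.mp hx').1
          rw [Equiv.swap_apply_of_ne_of_ne h1 h2] at hxy
          exact hxy ▸ (erase_subset _ _ hx')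
      · rw [card_image_of_injective _ (Equiv.injective _), ← hST]

/-- A permutation of ℕ carrying one finset onto another of equal cardinality,
fixing everything outside their union. -/
lemma exists_perm (S T : Finset ℕ) (h : S.card = T.card) :
    ∃ π : Equiv.Perm ℕ, (∀ x, x ∉ S ∪ T → π x = x) ∧ S.image π = T := by
  obtain ⟨π, hfix, himg⟩ := exists_perm_disj (S \ T).card (S \ T) (T \ S) rfl
    (by
      have h1 : (S \ T).card + (S ∩ T).card = S.card := by
        rw [card_sdiff_add_card_inter]
      have h2 : (T \ S).card + (T ∩ S).card = T.card := by
        rw [card_sdiff_add_card_inter]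
      rw [inter_comm] at h2
      omega)
    (disjoint_sdiff_sdiff)
  have hST : (S \ T) ∪ (T \ S) ⊆ S ∪ T := by
    apply union_subset
    · exact (sdiff_subset).trans subset_union_left
    · exact (sdiff_subset).trans subset_union_right
  refine ⟨π, fun x hx => hfix x (fun h' => hx (hST h')), ?_⟩
  have hfixInter : ∀ x ∈ S ∩ T, π x = x := by
    intro x hx
    apply hfix
    simp only [mem_union, mem_sdiff, not_or, not_and, not_not]
    exact ⟨fun _ => (mem_inter.mp hx).2, fun _ => (mem_inter.mp hx).1⟩
  apply eq_of_subset_of_card_le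
  · intro y hy
    rw [mem_image] at hy
    obtain ⟨x, hxS, hxy⟩ := hy
    by_cases hxT : x ∈ T
    · rw [hfixInter x (mem_inter.mpr ⟨hxS, hxT⟩)] at hxy
      exact hxy ▸ hxT
    · have : π x ∈ T \ S := himg ▸ mem_image_of_mem _ (mem_sdiff.mpr ⟨hxS, hxT⟩)
      exact hxy ▸ (mem_sdiff.mp this).1
  · rw [card_image_of_injective _ (Equiv.injective _), ← h]

def Shape (m : ℕ) (rl : MPP m) (w : Equiv.Perm ℕ) : Prop :=
  ∃ σ : Equiv.Perm ℕ, (∀ x < m, σ x = x) ∧ σ * rl.σ * σ⁻¹ = w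

def Cls (m n : ℕ) (rl : MPP m) : Set (Equiv.Perm ℕ) :=
  {w | Shape m rl w ∧ ∀ x, n ≤ x → w x = x}

lemma cls_finite (m n : ℕ) (rl : MPP m) : (Cls m n rl).Finite :=
  (finite_fixOutside (Finset.range n)).subset
    (fun w hw x hx => hw.2 x (by simpa using hx))

lemma supp_conj (σ u : Equiv.Perm ℕ) :
    {x | (σ * u * σ⁻¹) x ≠ x} = σ '' {x | u x ≠ x} := by
  ext x
  simp only [Set.mem_setOf_eq, Set.mem_image, Equiv.Perm.mul_apply]
  constructor
  · intro h
    refine ⟨σ⁻¹ x, fun hc => h ?_, σ.apply_inv_self x⟩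
    rw [hc, σ.apply_inv_self]
  · rintro ⟨y, hy, rfl⟩
    rw [σ.inv_apply_self]
    exact fun hc => hy (σ.injective hc)

lemma supp_subset_d (p : MPP m) : {x | p.σ x ≠ x} ⊆ ↑p.d :=
  fun x hx => by_contra fun hc => hx (p.fix x (by simpa using hc))

lemma proper_d {p : MPP m} (hp : p.isProper) :
    (↑p.d : Set ℕ) = ↑(Finset.range m) ∪ {x | p.σ x ≠ x} := by
  ext x
  simp only [Set.mem_union, Finset.coe_range, Set.mem_Iio, Set.mem_setOf_eq,
    Finset.mem_coe]
  constructor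
  · intro hx
    by_cases hxm : x < m
    · exact Or.inl hxm
    · exact Or.inr (hp x hx (le_of_not_gt hxm))
  · rintro (hx | hx)
    · exact p.range_sub (Finset.mem_range.mpr hx)
    · exact supp_subset_d p hx

lemma image_fix_lt {σ : Equiv.Perm ℕ} (hσ : ∀ x < m, σ x = x) :
    σ '' (↑(Finset.range m) : Set ℕ) = ↑(Finset.range m) := by
  ext x
  simp only [Set.mem_image, Finset.coe_range, Set.mem_Iio]
  constructor
  · rintro ⟨y, hy, rfl⟩
    rw [hσ y hy]; exact hy
  · intro hx
    exact ⟨x, hx, hσ x hx⟩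

/-- marked support of a conjugate: `[m] ∪ supp w = σ''(rl.d)` for proper `rl`. -/
lemma marked_supp_eq {rl : MPP m} (hlp : rl.isProper) {σ w : Equiv.Perm ℕ}
    (hσ : ∀ x < m, σ x = x) (hconj : σ * rl.σ * σ⁻¹ = w) :
    (↑(Finset.range m) : Set ℕ) ∪ {x | w x ≠ x} = σ '' ↑rl.d := by
  rw [proper_d hlp, Set.image_union, image_fix_lt hσ, ← hconj, supp_conj]

lemma mem_S_iff (m n : ℕ) (rl : MPP m) (hm : m ≤ n) (hld : rl.d ⊆ Finset.range n)
    (hlp : rl.isProper) (p : MPP m) :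
    (p.d ⊆ Finset.range n ∧ MPP.sameType (rl.padTo n) p) ↔
      (p.d = Finset.range n ∧ p.σ ∈ Cls m n rl) := by
  have hpad_d : (rl.padTo n).d = Finset.range n := Finset.union_eq_right.mpr hld
  have hpad_σ : (rl.padTo n).σ = rl.σ := rfl
  constructor
  · rintro ⟨hsub, σ, hσm, himg, hconj⟩
    rw [hpad_d] at himg
    have hdcard : p.d = Finset.range n := by
      apply Finset.eq_of_subset_of_card_le hsub
      rw [← himg, Finset.card_image_of_injective _ σ.injective]
    refine ⟨hdcard, ⟨σ, hσm, hconj⟩, fun x hx => ?_⟩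
    exact p.fix x (by rw [hdcard]; simpa using hx)
  · rintro ⟨hd, ⟨σ, hσm, hconj⟩, hsup⟩
    refine ⟨hd ▸ subset_rfl, ?_⟩
    -- image of rl.d under σ is inside range n
    have hA : rl.d.image σ ⊆ Finset.range n := by
      intro y hy
      rw [Finset.mem_image] at hy
      obtain ⟨x, hx, rfl⟩ := hy
      by_cases hxm : x < m
      · rw [hσm x hxm]
        exact Finset.mem_range.mpr (lt_of_lt_of_le hxm hm)
      · have hmoved : rl.σ x ≠ x := hlp x hx (le_of_not_gt hxm)
        have hw : p.σ (σ x) ≠ σ x := by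
          rw [← hconj]
          simp only [Equiv.Perm.mul_apply, σ.inv_apply_self]
          exact fun hc => hmoved (σ.injective hc)
        by_contra hxn
        exact hw (hsup _ (by simpa using hxn))
    set A := rl.d.image σ with hAdef
    have hAsub : A ⊆ (Finset.range n).image σ := Finset.image_subset_image hld
    have hcards : ((Finset.range n).image σ \ A).card = (Finset.range n \ A).card := by
      rw [Finset.card_sdiff_of_subset hAsub, Finset.card_sdiff_of_subset hA,
        Finset.card_image_of_injective _ σ.injective]
    obtain ⟨π, hπfix, hπimg⟩ := exists_perm _ _ hcards
    have hπA : ∀ x ∈ A, π x = x := by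
      intro x hx
      apply hπfix
      simp only [Finset.mem_union, Finset.mem_sdiff, not_or, not_and, not_not]
      exact ⟨fun _ => hx, fun _ => hx⟩
    refine ⟨π * σ, fun x hx => ?_, ?_, ?_⟩
    · have hσx : σ x = x := hσm x hx
      have hxA : x ∈ A := by
        rw [hAdef, Finset.mem_image]
        exact ⟨x, rl.range_sub (Finset.mem_range.mpr hx), hσx⟩
      simp [Equiv.Perm.mul_apply, hσx, hπA x hxA]
    · rw [hpad_d, hd]
      have h1 : (Finset.range n).image σ = ((Finset.range n).image σ \ A) ∪ A :=
        (Finset.sdiff_union_of_subset hAsub).symm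
      have himgA : A.image π = A := by
        apply Finset.eq_of_subset_of_card_le
        · intro y hy
          rw [Finset.mem_image] at hy
          obtain ⟨x, hx, rfl⟩ := hy
          rw [hπA x hx]; exact hx
        · rw [Finset.card_image_of_injective _ π.injective]
      calc (Finset.range n).image (π * σ) = ((Finset.range n).image σ).image π := by
            rw [Finset.image_image]; rfl
        _ = (((Finset.range n).image σ \ A) ∪ A).image π := by rw [← h1]
        _ = ((Finset.range n).image σ \ A).image π ∪ A.image π := Finset.image_union _ _
        _ = (Finset.range n \ A) ∪ A := by rw [hπimg, himgA]
        _ = Finset.range n := Finset.sdiff_union_of_subset hA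
    · rw [hpad_σ]
      have : (π * σ) * rl.σ * (π * σ)⁻¹ = π * (σ * rl.σ * σ⁻¹) * π⁻¹ := by
        group
      rw [this, hconj]
      apply conj_fix
      intro x hx
      apply hπA
      have hxsupp : x ∈ (↑(Finset.range m) : Set ℕ) ∪ {y | p.σ y ≠ y} := Or.inr hx
      rw [marked_supp_eq hlp hσm hconj] at hxsupp
      obtain ⟨y, hy, rfl⟩ := hxsupp
      exact Finset.mem_image_of_mem _ hy

lemma Kn_eq (m n : ℕ) (rl : MPP m) (hm : m ≤ n) (hld : rl.d ⊆ Finset.range n)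
    (hlp : rl.isProper) :
    Kn m n rl = ∑ w ∈ (cls_finite m n rl).toFinset, MonoidAlgebra.single w (1 : ℤ) := by
  rw [Kn]
  have himg : MPP.σ '' {p : MPP m | p.d ⊆ Finset.range n ∧ MPP.sameType (rl.padTo n) p}
      = Cls m n rl := by
    ext w
    constructor
    · rintro ⟨p, hp, rfl⟩
      exact ((mem_S_iff m n rl hm hld hlp p).mp hp).2
    · intro hw
      refine ⟨⟨Finset.range n, w, Finset.range_subset_range.mpr hm,
        fun x hx => hw.2 x (by simpa using hx)⟩, ?_, rfl⟩
      exact (mem_S_iff m n rl hm hld hlp _).mpr ⟨rfl, hw⟩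
  have hinj : Set.InjOn MPP.σ
      {p : MPP m | p.d ⊆ Finset.range n ∧ MPP.sameType (rl.padTo n) p} := by
    intro p hp q hq hpq
    have h1 := ((mem_S_iff m n rl hm hld hlp p).mp hp).1
    have h2 := ((mem_S_iff m n rl hm hld hlp q).mp hq).1
    exact MPP.ext (h1.trans h2.symm) hpq
  rw [← finsum_mem_image hinj (f := fun w => MonoidAlgebra.single w (1 : ℤ)), himg,
    ← finsum_mem_coe_finset, Set.Finite.coe_toFinset]

/-! ### The universal fibers -/

def Fib (m : ℕ) (rl rd r : MPP m) (E : Finset ℕ) : Set (Equiv.Perm ℕ × Equiv.Perm ℕ) :=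
  {uv | Shape m rl uv.1 ∧ Shape m rd uv.2 ∧ uv.1 * uv.2 = r.σ ∧
    ({x | uv.1 x ≠ x} ∪ {x | uv.2 x ≠ x}) \ ↑r.d = ↑E}

lemma fib_supp_sub {m : ℕ} {rl rd r : MPP m} {E : Finset ℕ} {uv : Equiv.Perm ℕ × Equiv.Perm ℕ}
    (h : uv ∈ Fib m rl rd r E) :
    {x | uv.1 x ≠ x} ∪ {x | uv.2 x ≠ x} ⊆ ↑(r.d ∪ E) := by
  intro x hx
  rw [Finset.coe_union]
  by_cases hxd : x ∈ (↑r.d : Set ℕ)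
  · exact Or.inl hxd
  · exact Or.inr (h.2.2.2 ▸ ⟨hx, hxd⟩)

lemma fib_finite (m : ℕ) (rl rd r : MPP m) (E : Finset ℕ) : (Fib m rl rd r E).Finite := by
  apply Set.Finite.subset
    ((finite_fixOutside (r.d ∪ E)).prod (finite_fixOutside (r.d ∪ E)))
  rintro ⟨u, v⟩ h
  have hs := fib_supp_sub h
  constructor
  · intro x hx
    by_contra hc
    exact hx (hs (Or.inl hc))
  · intro x hx
    by_contra hc
    exact hx (hs (Or.inr hc))

lemma mul_supp_sub (u v : Equiv.Perm ℕ) :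
    {x | (u * v) x ≠ x} ⊆ {x | u x ≠ x} ∪ {x | v x ≠ x} := by
  intro x hx
  by_cases hv : v x = x
  · exact Or.inl (by simpa [Equiv.Perm.mul_apply, hv] using hx)
  · exact Or.inr hv

lemma symmdiff_supp_sub (u v : Equiv.Perm ℕ) {x : ℕ} :
    (u x ≠ x ∧ v x = x) ∨ (u x = x ∧ v x ≠ x) → (u * v) x ≠ x := by
  rintro (⟨hu, hv⟩ | ⟨hu, hv⟩)
  · simpa [Equiv.Perm.mul_apply, hv] using hu
  · simp only [Equiv.Perm.mul_apply]
    intro hc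
    exact hv (u.injective (hc.trans hu.symm))

/-- Degree bound: a nonempty fiber forces `2|E| + |ρ| ≤ |λ| + |δ|`. -/
lemma fib_card_bound {m : ℕ} {rl rd r : MPP m} (hlp : rl.isProper) (hdp : rd.isProper)
    (hrp : r.isProper) {E : Finset ℕ} (h : (Fib m rl rd r E).Nonempty) :
    2 * E.card + r.d.card ≤ rl.d.card + rd.d.card := by
  obtain ⟨⟨u, v⟩, ⟨σu, hσum, hσuc⟩, ⟨σv, hσvm, hσvc⟩, huv, hE⟩ := h
  set M : Set ℕ := ↑(Finset.range m) with hM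
  set Su : Set ℕ := {x | u x ≠ x} with hSu
  set Sv : Set ℕ := {x | v x ≠ x} with hSv
  set A : Set ℕ := M ∪ Su with hA
  set B : Set ℕ := M ∪ Sv with hB
  set D : Set ℕ := ↑r.d with hD
  have hAeq : A = σu '' ↑rl.d := marked_supp_eq hlp hσum hσuc
  have hBeq : B = σv '' ↑rd.d := marked_supp_eq hdp hσvm hσvc
  have hAfin : A.Finite := hAeq ▸ (rl.d.finite_toSet.image _)
  have hBfin : B.Finite := hBeq ▸ (rd.d.finite_toSet.image _)
  have hAcard : A.ncard = rl.d.card := by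
    rw [hAeq, Set.ncard_image_of_injective _ σu.injective, Set.ncard_coe_finset]
  have hBcard : B.ncard = rd.d.card := by
    rw [hBeq, Set.ncard_image_of_injective _ σv.injective, Set.ncard_coe_finset]
  have hDeq : D = M ∪ {x | r.σ x ≠ x} := proper_d hrp
  have hrσ : {x : ℕ | r.σ x ≠ x} = {x | (u * v) x ≠ x} := by rw [huv]
  have hDsub : D ⊆ A ∪ B := by
    rw [hDeq, hrσ]
    intro x hx
    rcases hx with hx | hx
    · exact Or.inl (Or.inl hx)
    · rcases mul_supp_sub u v hx with h' | h'
      · exact Or.inl (Or.inr h')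
      · exact Or.inr (Or.inr h')
  have hUnionSub : A ∪ B ⊆ (A ∩ B) ∪ D := by
    intro x hx
    have hcase : x ∈ M ∨ x ∈ Su ∪ Sv := by
      rcases hx with hx | hx
      · rcases hx with hx | hx
        · exact Or.inl hx
        · exact Or.inr (Or.inl hx)
      · rcases hx with hx | hx
        · exact Or.inl hx
        · exact Or.inr (Or.inr hx)
    rcases hcase with hx' | hx'
    · exact Or.inl ⟨Or.inl hx', Or.inl hx'⟩
    · by_cases hu' : x ∈ Su
      · by_cases hv' : x ∈ Sv
        · exact Or.inl ⟨Or.inr hu', Or.inr hv'⟩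
        · refine Or.inr ?_
          rw [hDeq, hrσ]
          exact Or.inr (symmdiff_supp_sub u v (Or.inl ⟨hu', not_not.mp hv'⟩))
      · have hv' : x ∈ Sv := hx'.resolve_left hu'
        refine Or.inr ?_
        rw [hDeq, hrσ]
        exact Or.inr (symmdiff_supp_sub u v (Or.inr ⟨not_not.mp hu', hv'⟩))
  have hMD : M ⊆ D := by
    rw [hD]
    intro x hx
    exact r.range_sub (by simpa [hM] using hx)
  have hEeq : (↑E : Set ℕ) = (A ∪ B) \ D := by
    rw [← hE]
    have huni : A ∪ B = M ∪ (Su ∪ Sv) := by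
      rw [hA, hB]
      ext x
      simp only [Set.mem_union]
      tauto
    have h4 : (M ∪ (Su ∪ Sv)) \ D = (Su ∪ Sv) \ D := by
      rw [Set.union_diff_distrib, Set.diff_eq_empty.mpr hMD, Set.empty_union]
    rw [huni, h4]
  -- cardinality bookkeeping
  have hABfin : (A ∪ B).Finite := hAfin.union hBfin
  have h1 : ((A ∪ B) \ D).ncard + D.ncard = (A ∪ B).ncard :=
    Set.ncard_diff_add_ncard_of_subset hDsub hABfin
  have h2 : (A ∪ B).ncard + (A ∩ B).ncard = A.ncard + B.ncard :=
    Set.ncard_union_add_ncard_inter A B hAfin hBfin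
  have h3 : (A ∪ B).ncard ≤ (A ∩ B).ncard + D.ncard := by
    refine le_trans (Set.ncard_le_ncard hUnionSub ?_) (Set.ncard_union_le _ _)
    exact (hAfin.inter_of_left B).union (hABfin.subset hDsub)
  have hEcard : E.card = ((A ∪ B) \ D).ncard := by
    rw [← hEeq, Set.ncard_coe_finset]
  have hDcard : D.ncard = r.d.card := Set.ncard_coe_finset _
  omega

/-- Conjugation bijection between fibers over equal-size marking sets. -/
lemma fib_map {m : ℕ} {rl rd r : MPP m} {E E' : Finset ℕ} {τ : Equiv.Perm ℕ}
    (hτd : ∀ x ∈ r.d, τ x = x) (hτE : E.image τ = E') :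
    ∀ uv ∈ Fib m rl rd r E,
      (τ * uv.1 * τ⁻¹, τ * uv.2 * τ⁻¹) ∈ Fib m rl rd r E' := by
  rintro ⟨u, v⟩ ⟨⟨σu, hσum, hσuc⟩, ⟨σv, hσvm, hσvc⟩, huv, hE⟩
  have hτm : ∀ x < m, τ x = x := fun x hx =>
    hτd x (r.range_sub (Finset.mem_range.mpr hx))
  refine ⟨⟨τ * σu, fun x hx => ?_, by rw [← hσuc]; group⟩,
    ⟨τ * σv, fun x hx => ?_, by rw [← hσvc]; group⟩, ?_, ?_⟩
  · simp [Equiv.Perm.mul_apply, hσum x hx, hτm x hx]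
  · simp [Equiv.Perm.mul_apply, hσvm x hx, hτm x hx]
  · have : (τ * u * τ⁻¹) * (τ * v * τ⁻¹) = τ * (u * v) * τ⁻¹ := by group
    rw [this, huv]
    exact conj_fix (fun x hx => hτd x (supp_subset_d r hx))
  · have hτD : τ '' ↑r.d = ↑r.d := by
      ext y
      constructor
      · rintro ⟨x, hx, rfl⟩
        rw [hτd x hx]; exact hx
      · intro hy
        exact ⟨y, hy, hτd y hy⟩
    calc ({x | (τ * u * τ⁻¹) x ≠ x} ∪ {x | (τ * v * τ⁻¹) x ≠ x}) \ ↑r.d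
        = (τ '' {x | u x ≠ x} ∪ τ '' {x | v x ≠ x}) \ τ '' ↑r.d := by
          rw [supp_conj, supp_conj, hτD]
      _ = (τ '' ({x | u x ≠ x} ∪ {x | v x ≠ x})) \ τ '' ↑r.d := by
          rw [Set.image_union]
      _ = τ '' (({x | u x ≠ x} ∪ {x | v x ≠ x}) \ ↑r.d) := by
          rw [Set.image_diff τ.injective]
      _ = τ '' ↑E := by rw [hE]
      _ = ↑E' := by rw [← hτE, Finset.coe_image]

lemma fib_ncard_eq {m : ℕ} (rl rd r : MPP m) {E E' : Finset ℕ}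
    (hE : Disjoint E r.d) (hE' : Disjoint E' r.d) (hcard : E.card = E'.card) :
    (Fib m rl rd r E).ncard = (Fib m rl rd r E').ncard := by
  obtain ⟨τ, hτfix, hτimg⟩ := exists_perm E E' hcard
  have hτd : ∀ x ∈ r.d, τ x = x := fun x hx => hτfix x (by
    simp only [Finset.mem_union, not_or]
    exact ⟨fun h => (Finset.disjoint_left.mp hE h) hx,
      fun h => (Finset.disjoint_left.mp hE') h hx⟩)
  have hτd' : ∀ x ∈ r.d, τ⁻¹ x = x := by
    intro x hx
    have h1 := hτd x hx
    have h2 : τ⁻¹ (τ x) = τ⁻¹ x := by rw [h1]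
    rw [τ.inv_apply_self] at h2
    exact h2.symm
  have hτimg' : E'.image ⇑τ⁻¹ = E := by
    rw [← hτimg, Finset.image_image]
    have : (⇑τ⁻¹ ∘ ⇑τ) = id := by
      funext x; simp
    rw [this, Finset.image_id]
  set f : Equiv.Perm ℕ × Equiv.Perm ℕ → Equiv.Perm ℕ × Equiv.Perm ℕ :=
    fun uv => (τ * uv.1 * τ⁻¹, τ * uv.2 * τ⁻¹) with hf
  have hfinj : Function.Injective f := by
    rintro ⟨u, v⟩ ⟨u', v'⟩ h
    simp only [hf, Prod.mk.injEq] at h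
    have h1 : u = u' := mul_left_cancel (mul_right_cancel h.1)
    have h2 : v = v' := mul_left_cancel (mul_right_cancel h.2)
    rw [h1, h2]
  have himg : f '' Fib m rl rd r E = Fib m rl rd r E' := by
    apply Set.Subset.antisymm
    · rintro y ⟨uv, huv, rfl⟩
      exact fib_map hτd hτimg uv huv
    · rintro ⟨u, v⟩ huv
      refine ⟨(τ⁻¹ * u * τ⁻¹⁻¹, τ⁻¹ * v * τ⁻¹⁻¹), fib_map hτd' hτimg' ⟨u, v⟩ huv, ?_⟩
      simp only [hf, Prod.mk.injEq]
      constructor <;> group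
  rw [← himg, Set.ncard_image_of_injective _ hfinj]

/-! ### Canonical fibers and counting -/

def canonE (r : MPP m) (k : ℕ) : Finset ℕ :=
  (Finset.range k).image (fun i => i + (r.d.sup id + 1))

lemma canonE_card (r : MPP m) (k : ℕ) : (canonE r k).card = k := by
  rw [canonE, Finset.card_image_of_injective _ (add_left_injective _), Finset.card_range]

lemma canonE_disj (r : MPP m) (k : ℕ) : Disjoint (canonE r k) r.d := by
  rw [Finset.disjoint_left]
  intro x hx hxd
  rw [canonE, Finset.mem_image] at hx
  obtain ⟨i, _, rfl⟩ := hx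
  have := Finset.le_sup (f := id) hxd
  simp only [id_eq] at this
  omega

/-- The universal coefficient `N_k`. -/
noncomputable def Nk (m : ℕ) (rl rd r : MPP m) (k : ℕ) : ℕ :=
  (Fib m rl rd r (canonE r k)).ncard

lemma key_coe {m n : ℕ} (r : MPP m) {u v : Equiv.Perm ℕ} (hru : ∀ x, n ≤ x → u x = x)
    (hrv : ∀ x, n ≤ x → v x = x) :
    (({x | u x ≠ x} ∪ {x | v x ≠ x}) \ ↑r.d : Set ℕ)
      = ↑((Finset.range n \ r.d).filter (fun x => u x ≠ x ∨ v x ≠ x)) := by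
  ext x
  simp only [Set.mem_diff, Set.mem_union, Set.mem_setOf_eq, Finset.coe_filter,
    Finset.mem_sdiff, Finset.mem_range, Set.mem_setOf_eq, Finset.mem_coe]
  constructor
  · rintro ⟨hmov, hd⟩
    refine ⟨⟨?_, hd⟩, hmov⟩
    by_contra hc
    push_neg at hc
    rcases hmov with h | h
    · exact h (hru x hc)
    · exact h (hrv x hc)
  · rintro ⟨⟨_, hd⟩, hmov⟩
    exact ⟨hmov, hd⟩

open scoped Classical in
lemma fib_coe (m n : ℕ) (rl rd r : MPP m) (hrd : r.d ⊆ Finset.range n)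
    {E : Finset ℕ} (hE : E ⊆ Finset.range n \ r.d) :
    (↑((((cls_finite m n rl).toFinset ×ˢ (cls_finite m n rd).toFinset).filter
        (fun uv => uv.1 * uv.2 = r.σ)).filter
        (fun uv => ((Finset.range n \ r.d).filter
          (fun x => uv.1 x ≠ x ∨ uv.2 x ≠ x)) = E)) : Set (Equiv.Perm ℕ × Equiv.Perm ℕ))
      = Fib m rl rd r E := by
  ext ⟨u, v⟩
  simp only [Finset.coe_filter, Set.mem_setOf_eq, Finset.mem_filter, Finset.mem_product,
    Set.Finite.mem_toFinset]
  constructor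
  · rintro ⟨⟨⟨hu, hv⟩, huv⟩, hkey⟩
    refine ⟨hu.1, hv.1, huv, ?_⟩
    rw [key_coe r hu.2 hv.2, hkey]
  · rintro ⟨hsu, hsv, huv, hEset⟩
    have hbu : ∀ x, n ≤ x → u x = x := by
      intro x hx
      by_contra hc
      have hmem : x ∈ ({y | u y ≠ y} ∪ {y | v y ≠ y} : Set ℕ) := Or.inl hc
      by_cases hxd : x ∈ (↑r.d : Set ℕ)
      · have := hrd hxd
        simp only [Finset.mem_range] at this
        omega
      · have : x ∈ (↑E : Set ℕ) := hEset ▸ ⟨hmem, hxd⟩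
        have := hE this
        simp only [Finset.mem_sdiff, Finset.mem_range] at this
        omega
    have hbv : ∀ x, n ≤ x → v x = x := by
      intro x hx
      by_contra hc
      have hmem : x ∈ ({y | u y ≠ y} ∪ {y | v y ≠ y} : Set ℕ) := Or.inr hc
      by_cases hxd : x ∈ (↑r.d : Set ℕ)
      · have := hrd hxd
        simp only [Finset.mem_range] at this
        omega
      · have : x ∈ (↑E : Set ℕ) := hEset ▸ ⟨hmem, hxd⟩
        have := hE this
        simp only [Finset.mem_sdiff, Finset.mem_range] at this
        omega
    refine ⟨⟨⟨⟨hsu, hbu⟩, hsv, hbv⟩, huv⟩, ?_⟩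
    apply Finset.coe_injective
    rw [← key_coe r hbu hbv, hEset]

open scoped Classical in
lemma coeff_eq (m n : ℕ) (rl rd r : MPP m) (hm : m ≤ n) (hld : rl.d ⊆ Finset.range n)
    (hdd : rd.d ⊆ Finset.range n) (hlp : rl.isProper) (hdp : rd.isProper) :
    (Kn m n rl * Kn m n rd).coeff r.σ =
      ((((cls_finite m n rl).toFinset ×ˢ (cls_finite m n rd).toFinset).filter
        (fun uv => uv.1 * uv.2 = r.σ)).card : ℤ) := by
  rw [Kn_eq m n rl hm hld hlp, Kn_eq m n rd hm hdd hdp, Finset.sum_mul_sum]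
  simp only [MonoidAlgebra.single_mul_single, one_mul]
  rw [← Finset.sum_product'
    (f := fun u v => MonoidAlgebra.single (u * v) (1 : ℤ))]
  rw [MonoidAlgebra.coeff_sum, Finsupp.finset_sum_apply]
  simp only [MonoidAlgebra.single_apply]
  rw [Finset.sum_boole]

open scoped Classical in
lemma card_count (m n : ℕ) (rl rd r : MPP m) (hrd : r.d ⊆ Finset.range n)
    (hlp : rl.isProper) (hdp : rd.isProper) (hrp : r.isProper) :
    (((cls_finite m n rl).toFinset ×ˢ (cls_finite m n rd).toFinset).filter
        (fun uv => uv.1 * uv.2 = r.σ)).card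
      = ∑ k ∈ Finset.range ((rl.d.card + rd.d.card - r.d.card) / 2 + 1),
          Nk m rl rd r k * (n - r.d.card).choose k := by
  set s : Finset ℕ := Finset.range n \ r.d with hs
  set s0 := (((cls_finite m n rl).toFinset ×ˢ (cls_finite m n rd).toFinset).filter
        (fun uv => uv.1 * uv.2 = r.σ)) with hs0
  have hstep1 : s0.card = ∑ E ∈ s.powerset,
      (s0.filter (fun uv => s.filter (fun x => uv.1 x ≠ x ∨ uv.2 x ≠ x) = E)).card :=
    Finset.card_eq_sum_card_fiberwise
      (fun uv _ => Finset.mem_powerset.mpr (Finset.filter_subset _ _))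
  have hstep2 : ∀ E ∈ s.powerset,
      (s0.filter (fun uv => s.filter (fun x => uv.1 x ≠ x ∨ uv.2 x ≠ x) = E)).card
        = Nk m rl rd r E.card := by
    intro E hE
    have hEs := Finset.mem_powerset.mp hE
    have h1 := fib_coe m n rl rd r hrd hEs
    have h2 : (s0.filter (fun uv => s.filter
        (fun x => uv.1 x ≠ x ∨ uv.2 x ≠ x) = E)).card = (Fib m rl rd r E).ncard := by
      rw [← h1, Set.ncard_coe_finset]
    rw [h2, Nk]
    apply fib_ncard_eq rl rd r
    · rw [Finset.disjoint_left]
      intro x hx hxd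
      have := hEs hx
      rw [hs, Finset.mem_sdiff] at this
      exact this.2 hxd
    · exact canonE_disj r E.card
    · rw [canonE_card]
  rw [hstep1, Finset.sum_congr rfl hstep2,
    Finset.sum_powerset s (fun E => Nk m rl rd r E.card)]
  have hconst : ∀ j ∈ Finset.range (s.card + 1),
      (∑ E ∈ Finset.powersetCard j s, Nk m rl rd r E.card)
        = Nk m rl rd r j * s.card.choose j := by
    intro j _
    rw [Finset.sum_congr rfl (fun E hE => by
        rw [(Finset.mem_powersetCard.mp hE).2]),
      Finset.sum_const, Finset.card_powersetCard, smul_eq_mul, mul_comm]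
  rw [Finset.sum_congr rfl hconst]
  have hscard : s.card = n - r.d.card := by
    rw [hs, Finset.card_sdiff_of_subset hrd, Finset.card_range]
  set K := (rl.d.card + rd.d.card - r.d.card) / 2 with hK
  have hvanish : ∀ j, K < j → Nk m rl rd r j = 0 := by
    intro j hj
    rw [Nk]
    by_contra hc
    have hne := Set.nonempty_of_ncard_ne_zero hc
    have hb := fib_card_bound hlp hdp hrp hne
    rw [canonE_card] at hb
    omega
  have hRle : r.d.card ≤ n := by
    have := Finset.card_le_card hrd
    simpa using this
  set B := max (s.card) K with hB
  have e1 : ∑ j ∈ Finset.range (s.card + 1), Nk m rl rd r j * s.card.choose j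
      = ∑ j ∈ Finset.range (B + 1), Nk m rl rd r j * s.card.choose j := by
    apply Finset.sum_subset (Finset.range_subset_range.mpr (by omega))
    intro j _ hj
    rw [Finset.mem_range, not_lt] at hj
    rw [Nat.choose_eq_zero_of_lt (by omega), mul_zero]
  have e2 : ∑ j ∈ Finset.range (K + 1), Nk m rl rd r j * (n - r.d.card).choose j
      = ∑ j ∈ Finset.range (B + 1), Nk m rl rd r j * (n - r.d.card).choose j := by
    apply Finset.sum_subset (Finset.range_subset_range.mpr (by omega))
    intro j _ hj
    rw [Finset.mem_range, not_lt] at hj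
    rw [hvanish j (by omega), zero_mul]
  rw [e1, e2, hscard]

end FHaux

/-- for proper shapes λ, δ, ρ, the structure coefficient
c_{λ̲ₙδ̲ₙ}^{ρ̲ₙ}(n) of Z_{n,m} is a polynomial in n of degree at most
(|λ| + |δ| − |ρ|)/2. -/
theorem structure_coeff_degree_bound (m : ℕ) (rl rd r : MPP m)
    (hl : rl.isProper) (hd : rd.isProper) (hr : r.isProper) :
    ∃ P : Polynomial ℚ,
      (∀ n : ℕ, m ≤ n → rl.d ⊆ Finset.range n → rd.d ⊆ Finset.range n →
        r.d ⊆ Finset.range n →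
        (((Kn m n rl * Kn m n rd).coeff r.σ : ℤ) : ℚ) = P.eval (n : ℚ)) ∧
      2 * P.natDegree ≤ rl.d.card + rd.d.card - r.d.card := by
  classical
  refine ⟨∑ k ∈ Finset.range ((rl.d.card + rd.d.card - r.d.card) / 2 + 1),
    Polynomial.C ((FHaux.Nk m rl rd r k : ℚ) / (k.factorial : ℚ)) *
      ((descPochhammer ℚ k).comp (Polynomial.X - Polynomial.C (r.d.card : ℚ))), ?_, ?_⟩
  · intro n hm hld hdd hrd
    have hRn : r.d.card ≤ n := by simpa using Finset.card_le_card hrd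
    rw [FHaux.coeff_eq m n rl rd r hm hld hdd hl hd,
      FHaux.card_count m n rl rd r hrd hl hd hr, Polynomial.eval_finset_sum]
    push_cast
    apply Finset.sum_congr rfl
    intro k _
    rw [Polynomial.eval_mul, Polynomial.eval_C, Polynomial.eval_comp, Polynomial.eval_sub,
      Polynomial.eval_X, Polynomial.eval_C]
    have h1 : (n : ℚ) - (r.d.card : ℚ) = ((n - r.d.card : ℕ) : ℚ) := by
      rw [Nat.cast_sub hRn]
    rw [h1, descPochhammer_eval_eq_descFactorial,
      Nat.descFactorial_eq_factorial_mul_choose]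
    have hk : (k.factorial : ℚ) ≠ 0 := Nat.cast_ne_zero.mpr k.factorial_ne_zero
    push_cast
    field_simp
  · have hdeg : (∑ k ∈ Finset.range ((rl.d.card + rd.d.card - r.d.card) / 2 + 1),
        Polynomial.C ((FHaux.Nk m rl rd r k : ℚ) / (k.factorial : ℚ)) *
          ((descPochhammer ℚ k).comp
            (Polynomial.X - Polynomial.C (r.d.card : ℚ)))).natDegree
        ≤ (rl.d.card + rd.d.card - r.d.card) / 2 := by
      apply Polynomial.natDegree_sum_le_of_forall_le
      intro k hk
      refine le_trans (Polynomial.natDegree_C_mul_le _ _) ?_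
      rw [Polynomial.natDegree_comp, descPochhammer_natDegree,
        Polynomial.natDegree_X_sub_C, mul_one]
      exact Nat.lt_succ_iff.mp (Finset.mem_range.mp hk)
    omega
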